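/- Equivalence of the two-stage distributionally robust problem with its dual reformulation: let U be a nonempty set of first-stage decisions, g : U → ℝ a first-stage cost, μ : U → (L → ℝ) a decision-dependent moment bound, and H : U → 𝒜 → ℝ a decision-dependent recourse cost, and assume the ambiguity set P(μ u) is nonempty for every u ∈ U. Then the infimum over u ∈ U of g u plus the (attained) maximum of Σ_{a∈𝒜} q a · H u a over q ∈ P(μ u) equals the infimum, over all u ∈ U and all (ψ⁺, ψ⁻, φ) that are dual feasible for the data (μ u, H u), of g u + Σ_{l∈L} ψ⁺ l · (μ u) l + φ. -/

import Mathlib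

/-!
For a fixed first-stage decision the inner problem is a finite linear program over the pmfs on
`𝒜`, and the dual reformulation is its LP dual. The pmfs map onto the convex hull of the points
`(1 - a, H a)`, a compact convex set, so the primal maximum is attained. Weak duality bounds
every dual objective value below by the primal maximum `m`. Conversely, separating `(μ, m + ε)`
from that hull plus the cone `{z | 0 ≤ z.1, z.2 ≤ 0}` gives a hyperplane whose normal, once
normalised, is a dual feasible point of objective value `m + ε`. Hence the two infima agree.
-/

open Set Pointwise

-- This includes empty or unbounded-below `s`, `t`, where both infima are the junk value `0`.
theorem Real.sInf_eq_sInf_of_forall_exists_le_add {s t : Set ℝ}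
    (hts : ∀ y ∈ t, ∃ x ∈ s, x ≤ y) (hst : ∀ x ∈ s, ∀ ε > 0, ∃ y ∈ t, y ≤ x + ε) :
    sInf s = sInf t := by
  rcases s.eq_empty_or_nonempty with rfl | hs
  · obtain rfl : t = ∅ := eq_empty_of_forall_notMem fun y hy => by simpa using hts y hy
    rfl
  have ht : t.Nonempty :=
    let ⟨x, hx⟩ := hs
    let ⟨y, hy, _⟩ := hst x hx 1 one_pos
    ⟨y, hy⟩
  have hbdd : BddBelow s ↔ BddBelow t := by
    refine ⟨fun ⟨b, hb⟩ => ⟨b, fun y hy => ?_⟩, fun ⟨b, hb⟩ => ⟨b - 1, fun x hx => ?_⟩⟩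
    · obtain ⟨x, hx, hxy⟩ := hts y hy
      exact (hb hx).trans hxy
    · obtain ⟨y, hy, hyx⟩ := hst x hx 1 one_pos
      linarith [hb hy]
  by_cases hb : BddBelow s
  · refine le_antisymm (le_csInf ht fun y hy => ?_) (le_csInf hs fun x hx => ?_)
    · obtain ⟨x, hx, hxy⟩ := hts y hy
      exact (csInf_le hb hx).trans hxy
    · refine le_of_forall_pos_le_add fun ε hε => ?_
      obtain ⟨y, hy, hyx⟩ := hst x hx ε hε
      exact (csInf_le (hbdd.1 hb) hy).trans hyx
  · rw [Real.sInf_of_not_bddBelow hb, Real.sInf_of_not_bddBelow (mt hbdd.2 hb)]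

lemma nonpos_of_forall_nonneg_mul_lt {b c : ℝ} (h : ∀ s : ℝ, 0 ≤ s → s * b < c) : b ≤ 0 := by
  by_contra! hb
  have hc : 0 < c := by simpa using h 0 le_rfl
  have := h (c / b) (div_nonneg hc.le hb.le)
  rw [div_mul_cancel₀ _ hb.ne'] at this
  exact this.false

theorem Finset.convexHull_image_eq_sum_smul {R ι E : Type*} [Field R] [LinearOrder R]
    [IsStrictOrderedRing R] [AddCommGroup E] [Module R E] (s : Finset ι) (v : ι → E) :
    convexHull R (v '' s) =
      (fun q : ι → R => ∑ i ∈ s, q i • v i) '' {q | (∀ i ∈ s, 0 ≤ q i) ∧ ∑ i ∈ s, q i = 1} := by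
  classical
  refine (convexHull_min ?_ ?_).antisymm ?_
  · rintro _ ⟨i, hi, rfl⟩
    rw [Finset.mem_coe] at hi
    exact ⟨Pi.single i 1, ⟨fun j _ => by by_cases h : j = i <;> simp [h], by simp [hi]⟩,
      by simp [Pi.single_apply, ite_smul, hi]⟩
  · rintro _ ⟨q, ⟨hq₀, hq₁⟩, rfl⟩ _ ⟨q', ⟨hq₀', hq₁'⟩, rfl⟩ a b ha hb hab
    refine ⟨a • q + b • q', ⟨fun i hi => ?_, ?_⟩, ?_⟩
    · exact add_nonneg (mul_nonneg ha (hq₀ i hi)) (mul_nonneg hb (hq₀' i hi))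
    · simp [Finset.sum_add_distrib, ← Finset.mul_sum, hq₁, hq₁', hab]
    · simp [add_smul, mul_smul, Finset.sum_add_distrib, Finset.smul_sum]
  · rintro _ ⟨q, ⟨hq₀, hq₁⟩, rfl⟩
    dsimp only
    rw [← s.centerMass_eq_of_sum_1 _ hq₁]
    exact s.centerMass_mem_convexHull hq₀ (hq₁ ▸ zero_lt_one)
      fun i hi => Set.mem_image_of_mem v (Finset.mem_coe.2 hi)

lemma mk_notMem_add_Ici_prod_Iic {E : Type*} [AddCommGroup E] [PartialOrder E]
    [IsOrderedAddMonoid E] {M : Set (E × ℝ)} {μ : E} {m ε : ℝ}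
    (hbound : ∀ x ∈ M, x.1 ≤ μ → x.2 ≤ m) (hε : 0 < ε) :
    ((μ, m + ε) : E × ℝ) ∉ M + Ici 0 ×ˢ Iic 0 := by
  rintro ⟨x, hx, n, ⟨hn₁, hn₂⟩, hxn⟩
  have hx₁ : x.1 + n.1 = μ := congrArg Prod.fst hxn
  have hx₂ : x.2 + n.2 = m + ε := congrArg Prod.snd hxn
  linarith [hbound x hx (hx₁ ▸ le_add_of_nonneg_right hn₁), show n.2 ≤ 0 from hn₂]

section Duality

variable {L : Type*} [Fintype L]

lemma ContinuousLinearMap.apply_eq_sum_mul_add_mul [DecidableEq L] (f : (L → ℝ) × ℝ →L[ℝ] ℝ)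
    (z : (L → ℝ) × ℝ) : f z = ∑ l, f (Pi.single l 1, 0) * z.1 l + f (0, 1) * z.2 := by
  have hfst : f (z.1, 0) = ∑ l, z.1 l * f (fun j => if l = j then 1 else 0, 0) :=
    (f.toLinearMap ∘ₗ LinearMap.inl ℝ (L → ℝ) ℝ).pi_apply_eq_sum_univ z.1
  have hsnd : f (0, z.2) = z.2 * f (0, 1) := by
    rw [← smul_eq_mul, ← map_smul, Prod.smul_mk, smul_zero, smul_eq_mul, mul_one]
  have hsingle : ∀ l : L, (fun j => if l = j then (1 : ℝ) else 0) = Pi.single l 1 :=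
    fun l => funext fun j => by simp only [Pi.single_apply, @eq_comm _ j l]
  calc f z = f (z.1, 0) + f (0, z.2) := by rw [← map_add, Prod.mk_add_mk, add_zero, zero_add]
    _ = _ := by simp only [hfst, hsnd, hsingle, mul_comm]

theorem exists_lagrange_multiplier_of_isCompact_of_convex {M : Set ((L → ℝ) × ℝ)}
    (hMcomp : IsCompact M) (hMconv : Convex ℝ M) {μ : L → ℝ} {m : ℝ}
    (hfeas : ∃ x ∈ M, x.1 ≤ μ) (hbound : ∀ x ∈ M, x.1 ≤ μ → x.2 ≤ m) {ε : ℝ} (hε : 0 < ε) :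
    ∃ (ψ : L → ℝ) (φ : ℝ), 0 ≤ ψ ∧ (∀ x ∈ M, x.2 ≤ ∑ l, ψ l * x.1 l + φ) ∧
      ∑ l, ψ l * μ l + φ = m + ε := by
  classical
  set N : Set ((L → ℝ) × ℝ) := Ici 0 ×ˢ Iic 0
  obtain ⟨f, u, hsep, hu⟩ := geometric_hahn_banach_closed_point
    (hMconv.add ((convex_Ici 0).prod (convex_Iic 0)))
    ((isClosed_Ici.prod isClosed_Iic).add_left_of_isCompact hMcomp)
    (mk_notMem_add_Ici_prod_Iic hbound hε)
  obtain ⟨x₀, hx₀, hx₀μ⟩ := hfeas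
  have hM : ∀ x ∈ M, f x < u := fun x hx => by
    simpa using hsep (x + 0) (add_mem_add hx ⟨self_mem_Ici, self_mem_Iic⟩)
  have hfN : ∀ n ∈ N, f n ≤ 0 := fun n hn => nonpos_of_forall_nonneg_mul_lt fun s hs => by
    have hsn : s • n ∈ N :=
      ⟨mem_Ici.2 (smul_nonneg hs hn.1), mem_Iic.2 (mul_nonpos_of_nonneg_of_nonpos hs hn.2)⟩
    have := hsep _ (add_mem_add hx₀ hsn)
    rw [map_add, map_smul, smul_eq_mul] at this
    exact lt_sub_iff_add_lt'.2 this
  -- a feasible `x₀` rules out a vertical hyperplane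
  have hβ : 0 < f (0, 1) := by
    by_contra! hβ
    have hdecomp : ((μ, m + ε) : (L → ℝ) × ℝ) = x₀ + (μ - x₀.1, 0) + (m + ε - x₀.2) • (0, 1) := by
      ext <;> simp
    have hμ := hfN (μ - x₀.1, 0) ⟨sub_nonneg.2 hx₀μ, self_mem_Iic⟩
    have hm := mul_nonpos_of_nonneg_of_nonpos
      (by linarith [hbound x₀ hx₀ hx₀μ] : 0 ≤ m + ε - x₀.2) hβ
    rw [hdecomp, map_add, map_add, map_smul, smul_eq_mul] at hu
    linarith [hM x₀ hx₀]
  set ψ : L → ℝ := fun l => -f (Pi.single l 1, 0) / f (0, 1)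
  have hψ : ∀ y : L → ℝ, ∑ l, ψ l * y l = -(∑ l, f (Pi.single l 1, 0) * y l) / f (0, 1) :=
    fun y => by
      rw [← Finset.sum_neg_distrib, Finset.sum_div]
      exact Finset.sum_congr rfl fun l _ => by ring
  refine ⟨ψ, m + ε - ∑ l, ψ l * μ l, fun l => div_nonneg (neg_nonneg.2 (hfN _ ?_)) hβ.le,
    fun x hx => ?_, add_sub_cancel _ _⟩
  · exact ⟨Pi.single_nonneg.2 zero_le_one, self_mem_Iic⟩
  have hlt := (hM x hx).trans hu
  rw [f.apply_eq_sum_mul_add_mul x, f.apply_eq_sum_mul_add_mul (μ, m + ε)] at hlt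
  rw [hψ, hψ]
  field_simp
  linarith

end Duality

section DRO

variable {L : Type*}

def ambiguitySet (𝒜 : Finset (L → ℝ)) (μ : L → ℝ) : Set ((L → ℝ) → ℝ) :=
  {q | (∀ a ∈ 𝒜, 0 ≤ q a) ∧ (∑ a ∈ 𝒜, q a = 1) ∧ ∀ l, ∑ a ∈ 𝒜, q a * (1 - a l) ≤ μ l}

def IsDualFeasible [Fintype L] (𝒜 : Finset (L → ℝ)) (H : (L → ℝ) → ℝ) (ψp ψm : L → ℝ)
    (φ : ℝ) : Prop :=
  (∀ l, 0 ≤ ψp l) ∧ (∀ l, 0 ≤ ψm l) ∧ ∀ a ∈ 𝒜, ∑ l, (ψp l - ψm l) * (1 - a l) + φ ≥ H a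

def failureCostPoint (H : (L → ℝ) → ℝ) (a : L → ℝ) : (L → ℝ) × ℝ := (1 - a, H a)

lemma sum_smul_failureCostPoint (𝒜 : Finset (L → ℝ)) (H q : (L → ℝ) → ℝ) :
    ∑ a ∈ 𝒜, q a • failureCostPoint H a =
      (fun l => ∑ a ∈ 𝒜, q a * (1 - a l), ∑ a ∈ 𝒜, q a * H a) := by
  ext <;> simp [failureCostPoint, Prod.fst_sum, Prod.snd_sum]

theorem image_expectedCost_ambiguitySet (𝒜 : Finset (L → ℝ)) (μ : L → ℝ) (H : (L → ℝ) → ℝ) :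
    (fun q => ∑ a ∈ 𝒜, q a * H a) '' ambiguitySet 𝒜 μ =
      Prod.snd '' (convexHull ℝ (failureCostPoint H '' 𝒜) ∩ {z | z.1 ≤ μ}) := by
  rw [Finset.convexHull_image_eq_sum_smul]
  ext x
  constructor
  · rintro ⟨q, ⟨hq₀, hq₁, hqμ⟩, rfl⟩
    exact ⟨_, ⟨⟨q, ⟨hq₀, hq₁⟩, rfl⟩, by simpa [sum_smul_failureCostPoint, Pi.le_def] using hqμ⟩,
      by simp [sum_smul_failureCostPoint]⟩
  · rintro ⟨_, ⟨⟨q, ⟨hq₀, hq₁⟩, rfl⟩, hqμ⟩, rfl⟩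
    simp only [sum_smul_failureCostPoint, mem_ofPred_eq, Pi.le_def] at hqμ
    exact ⟨q, ⟨hq₀, hq₁, hqμ⟩, by simp [sum_smul_failureCostPoint]⟩

lemma isCompact_convexHull_failureCostPoint (𝒜 : Finset (L → ℝ)) (H : (L → ℝ) → ℝ) :
    IsCompact (convexHull ℝ (failureCostPoint H '' 𝒜)) :=
  (𝒜.finite_toSet.image _).isCompact_convexHull (𝕜 := ℝ)

theorem exists_isGreatest_expectedCost {𝒜 : Finset (L → ℝ)} {μ : L → ℝ}
    (hne : (ambiguitySet 𝒜 μ).Nonempty) (H : (L → ℝ) → ℝ) :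
    ∃ m, IsGreatest {x | ∃ q, q ∈ ambiguitySet 𝒜 μ ∧ x = ∑ a ∈ 𝒜, q a * H a} m := by
  have hvalues : {x | ∃ q, q ∈ ambiguitySet 𝒜 μ ∧ x = ∑ a ∈ 𝒜, q a * H a} =
      Prod.snd '' (convexHull ℝ (failureCostPoint H '' 𝒜) ∩ {z | z.1 ≤ μ}) := by
    rw [← image_expectedCost_ambiguitySet]
    simp only [image, eq_comm]
  rw [hvalues]
  refine IsCompact.exists_isGreatest ?_ ?_
  · exact ((isCompact_convexHull_failureCostPoint 𝒜 H).inter_right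
      (isClosed_le continuous_fst continuous_const)).image continuous_snd
  · rw [← image_expectedCost_ambiguitySet]
    exact hne.image _

variable [Fintype L]

theorem expectedCost_le_dualObjective {𝒜 : Finset (L → ℝ)} (h𝒜 : ∀ a ∈ 𝒜, ∀ l, a l ≤ 1)
    {μ ψp ψm : L → ℝ} {H q : (L → ℝ) → ℝ} {φ : ℝ} (hq : q ∈ ambiguitySet 𝒜 μ)
    (hdual : IsDualFeasible 𝒜 H ψp ψm φ) :
    ∑ a ∈ 𝒜, q a * H a ≤ ∑ l, ψp l * μ l + φ := by
  obtain ⟨hq₀, hq₁, hqμ⟩ := hq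
  obtain ⟨hψp, hψm, hH⟩ := hdual
  calc ∑ a ∈ 𝒜, q a * H a
      ≤ ∑ a ∈ 𝒜, q a * (∑ l, (ψp l - ψm l) * (1 - a l) + φ) :=
        Finset.sum_le_sum fun a ha => mul_le_mul_of_nonneg_left (hH a ha) (hq₀ a ha)
    _ = ∑ l, (ψp l - ψm l) * ∑ a ∈ 𝒜, q a * (1 - a l) + φ := by
        simp only [mul_add, Finset.sum_add_distrib, ← Finset.sum_mul, hq₁, one_mul,
          Finset.mul_sum]
        rw [Finset.sum_comm]
        congr 1
        exact Finset.sum_congr rfl fun l _ => Finset.sum_congr rfl fun a _ => by ring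
    _ ≤ ∑ l, ψp l * μ l + φ := by
        refine add_le_add_left (Finset.sum_le_sum fun l _ => ?_) φ
        have hmoment : 0 ≤ ∑ a ∈ 𝒜, q a * (1 - a l) :=
          Finset.sum_nonneg fun a ha => mul_nonneg (hq₀ a ha) (sub_nonneg.2 (h𝒜 a ha l))
        calc (ψp l - ψm l) * ∑ a ∈ 𝒜, q a * (1 - a l)
            ≤ ψp l * ∑ a ∈ 𝒜, q a * (1 - a l) :=
              mul_le_mul_of_nonneg_right (sub_le_self _ (hψm l)) hmoment
          _ ≤ ψp l * μ l := mul_le_mul_of_nonneg_left (hqμ l) (hψp l)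

theorem exists_isDualFeasible_objective_eq {𝒜 : Finset (L → ℝ)} {μ : L → ℝ}
    {H : (L → ℝ) → ℝ} (hne : (ambiguitySet 𝒜 μ).Nonempty) {m : ℝ}
    (hm : ∀ q ∈ ambiguitySet 𝒜 μ, ∑ a ∈ 𝒜, q a * H a ≤ m) {ε : ℝ} (hε : 0 < ε) :
    ∃ (ψ : L → ℝ) (φ : ℝ), IsDualFeasible 𝒜 H ψ 0 φ ∧ ∑ l, ψ l * μ l + φ = m + ε := by
  have hvalues := image_expectedCost_ambiguitySet 𝒜 μ H
  have hfeas : ∃ z ∈ convexHull ℝ (failureCostPoint H '' 𝒜), z.1 ≤ μ := by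
    obtain ⟨_, z, hz, rfl⟩ := (hne.image _).mono hvalues.subset
    exact ⟨z, hz⟩
  have hbound : ∀ z ∈ convexHull ℝ (failureCostPoint H '' 𝒜), z.1 ≤ μ → z.2 ≤ m := by
    intro z hz hzμ
    obtain ⟨q, hq, hqz⟩ := hvalues.symm.subset ⟨z, ⟨hz, hzμ⟩, rfl⟩
    exact hqz ▸ hm q hq
  obtain ⟨ψ, φ, hψ, hψφ, hobj⟩ := exists_lagrange_multiplier_of_isCompact_of_convex
    (isCompact_convexHull_failureCostPoint 𝒜 H) (convex_convexHull ℝ _) hfeas hbound hε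
  refine ⟨ψ, φ, ⟨hψ, fun _ => le_rfl, fun a ha => ?_⟩, hobj⟩
  simpa [failureCostPoint] using hψφ _ (subset_convexHull ℝ _ (mem_image_of_mem _ ha))

end DRO

theorem two_stage_dro_dual_reformulation_general
    {L : Type*} [Fintype L]
    {U : Type*}
    (𝒜 : Finset (L → ℝ))
    (hbin : ∀ a ∈ 𝒜, ∀ l : L, a l = 0 ∨ a l = 1)
    (g : U → ℝ) (μ : U → L → ℝ) (H : U → (L → ℝ) → ℝ)
    (hne : ∀ u : U, ∃ q : (L → ℝ) → ℝ,
      (∀ a ∈ 𝒜, 0 ≤ q a) ∧ (∑ a ∈ 𝒜, q a = 1) ∧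
      (∀ l : L, ∑ a ∈ 𝒜, q a * (1 - a l) ≤ μ u l)) :
    sInf {v : ℝ | ∃ (u : U) (m : ℝ),
        IsGreatest {x : ℝ | ∃ q : (L → ℝ) → ℝ,
          ((∀ a ∈ 𝒜, 0 ≤ q a) ∧ (∑ a ∈ 𝒜, q a = 1) ∧
            (∀ l : L, ∑ a ∈ 𝒜, q a * (1 - a l) ≤ μ u l)) ∧
          x = ∑ a ∈ 𝒜, q a * H u a} m ∧
        v = g u + m} =
      sInf {v : ℝ | ∃ (u : U) (ψp ψm : L → ℝ) (φ : ℝ),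
        ((∀ l : L, 0 ≤ ψp l) ∧ (∀ l : L, 0 ≤ ψm l) ∧
          (∀ a ∈ 𝒜, ∑ l : L, (ψp l - ψm l) * (1 - a l) + φ ≥ H u a)) ∧
        v = g u + (∑ l : L, ψp l * μ u l + φ)} := by
  have h𝒜 : ∀ a ∈ 𝒜, ∀ l, a l ≤ 1 := fun a ha l => by rcases hbin a ha l with h | h <;> simp [h]
  refine Real.sInf_eq_sInf_of_forall_exists_le_add ?_ ?_
  · rintro _ ⟨u, ψp, ψm, φ, hdual, rfl⟩
    obtain ⟨m, hm⟩ := exists_isGreatest_expectedCost (hne u) (H u)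
    obtain ⟨q, hq, rfl⟩ := hm.1
    exact ⟨_, ⟨u, _, hm, rfl⟩, add_le_add_right (expectedCost_le_dualObjective h𝒜 hq hdual) _⟩
  · rintro _ ⟨u, m, hm, rfl⟩ ε hε
    obtain ⟨ψ, φ, hdual, hobj⟩ :=
      exists_isDualFeasible_objective_eq (hne u) (fun q hq => hm.2 ⟨q, hq, rfl⟩) hε
    exact ⟨_, ⟨u, ψ, 0, φ, hdual, rfl⟩, by rw [hobj, add_assoc]⟩

/-- Equivalence of the two-stage distributionally robust problem with its dual
reformulation: the infimum over first-stage decisions `u` of the first-stage cost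
plus the attained worst-case expected recourse cost over the decision-dependent
ambiguity set `P(μ u)` equals the infimum over `u` and dual feasible points
`(ψ⁺, ψ⁻, φ)` of the first-stage cost plus the dual objective. -/
theorem two_stage_dro_dual_reformulation
    {L : Type*} [Fintype L] [Nonempty L]
    {U : Type*} [Nonempty U]
    (𝒜 : Finset (L → ℝ)) (h𝒜 : 𝒜.Nonempty)
    (hbin : ∀ a ∈ 𝒜, ∀ l : L, a l = 0 ∨ a l = 1)
    (g : U → ℝ) (μ : U → L → ℝ) (H : U → (L → ℝ) → ℝ)
    (hne : ∀ u : U, ∃ q : (L → ℝ) → ℝ,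
      (∀ a ∈ 𝒜, 0 ≤ q a) ∧ (∑ a ∈ 𝒜, q a = 1) ∧
      (∀ l : L, ∑ a ∈ 𝒜, q a * (1 - a l) ≤ μ u l)) :
    sInf {v : ℝ | ∃ (u : U) (m : ℝ),
        IsGreatest {x : ℝ | ∃ q : (L → ℝ) → ℝ,
          ((∀ a ∈ 𝒜, 0 ≤ q a) ∧ (∑ a ∈ 𝒜, q a = 1) ∧
            (∀ l : L, ∑ a ∈ 𝒜, q a * (1 - a l) ≤ μ u l)) ∧
          x = ∑ a ∈ 𝒜, q a * H u a} m ∧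
        v = g u + m} =
      sInf {v : ℝ | ∃ (u : U) (ψp ψm : L → ℝ) (φ : ℝ),
        ((∀ l : L, 0 ≤ ψp l) ∧ (∀ l : L, 0 ≤ ψm l) ∧
          (∀ a ∈ 𝒜, ∑ l : L, (ψp l - ψm l) * (1 - a l) + φ ≥ H u a)) ∧
        v = g u + (∑ l : L, ψp l * μ u l + φ)} :=
  two_stage_dro_dual_reformulation_general 𝒜 hbin g μ H hne
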